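/- arXiv:1807.05257 — 2 statements merged into one kernel-verified Lean document; each statement's English description precedes it below -/
import Mathlib

section
/- For every a in (0,1) and every even nonnegative integer k, the function f_{a,k}(x) = ψ⁽ᵏ⁾(x+a) - ψ⁽ᵏ⁾(x) - a·k!/x^{k+1} is strictly convex on (0, ∞). -/
/-!
For `j ≥ 1` we have `ψ⁽ʲ⁾(x) = (-1)ʲ⁺¹ j! ζ(j + 1, x)`: the derivatives of Gauss's
limit formula for `log Γ` converge locally uniformly to a series for `ψ`, which can
then be differentiated termwise. For even `k` the second derivative of `f_{a,k}` is
therefore `(k + 2)! (ζ(m, y) - ζ(m, y + a) - a y⁻ᵐ)` with `m = k + 3`. Strict convexity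
of `t ↦ t⁻ᵐ` gives `(y + n + a)⁻ᵐ < (1 - a) (y + n)⁻ᵐ + a (y + n + 1)⁻ᵐ` for every `n`,
and summing over `n` yields `ζ(m, y) - ζ(m, y + a) > a (ζ(m, y) - ζ(m, y + 1)) = a y⁻ᵐ`.
-/

noncomputable def digamma : ℝ → ℝ := deriv (fun x => Real.log (Real.Gamma x))

noncomputable def polygamma (n : ℕ) : ℝ → ℝ := deriv^[n] digamma

open Real Filter Topology Set Finset
open scoped Nat

lemma hasDerivAt_inv_pow (m : ℕ) {x : ℝ} (hx : x ≠ 0) :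
    HasDerivAt (fun y : ℝ => (y ^ m)⁻¹) (-m * (x ^ (m + 1))⁻¹) x := by
  have hf : (fun y : ℝ => (y ^ m)⁻¹) = fun y => y ^ (-(m : ℤ)) := by
    ext y
    rw [zpow_neg, zpow_natCast]
  rw [hf]
  refine (hasDerivAt_zpow (-(m : ℤ)) x (.inl hx)).congr_deriv ?_
  rw [show -(m : ℤ) - 1 = -((m + 1 : ℕ) : ℤ) by push_cast; ring, zpow_neg, zpow_natCast]
  push_cast
  ring

lemma strictConvexOn_inv_pow {m : ℕ} (hm : m ≠ 0) :
    StrictConvexOn ℝ (Ioi 0) fun x : ℝ => (x ^ m)⁻¹ := by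
  simpa [zpow_neg] using strictConvexOn_zpow (m := -(m : ℤ)) (by omega) (by omega)

lemma summable_inv_add_pow {m : ℕ} (hm : 2 ≤ m) {x : ℝ} (hx : 0 < x) :
    Summable fun n : ℕ => ((x + n) ^ m)⁻¹ := by
  refine ((Real.summable_one_div_nat_add_rpow x m).2 (by exact_mod_cast hm)).congr fun n => ?_
  rw [abs_of_pos (by positivity), Real.rpow_natCast, one_div, add_comm]

/-- The Hurwitz zeta function `ζ(m, x)` at a natural argument `m`. -/
noncomputable def hurwitzSum (m : ℕ) (x : ℝ) : ℝ := ∑' n : ℕ, ((x + n) ^ m)⁻¹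

lemma hurwitzSum_eq_inv_pow_add {m : ℕ} (hm : 2 ≤ m) {x : ℝ} (hx : 0 < x) :
    hurwitzSum m x = (x ^ m)⁻¹ + hurwitzSum m (x + 1) := by
  rw [hurwitzSum, (summable_inv_add_pow hm hx).tsum_eq_zero_add, hurwitzSum]
  push_cast
  simp only [add_zero, add_assoc, add_comm (1 : ℝ)]

lemma hasDerivAt_hurwitzSum {m : ℕ} (hm : 2 ≤ m) {x : ℝ} (hx : 0 < x) :
    HasDerivAt (hurwitzSum m) (-m * hurwitzSum (m + 1) x) x := by
  have hx₂ : 0 < x / 2 := by positivity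
  rw [hurwitzSum, ← tsum_mul_left]
  refine hasDerivAt_tsum_of_isPreconnected (g := fun (n : ℕ) (y : ℝ) => ((y + n) ^ m)⁻¹)
    (t := Ioi (x / 2)) ((summable_inv_add_pow (m := m + 1) (by omega) hx₂).mul_left (m : ℝ))
    isOpen_Ioi isPreconnected_Ioi
    (fun n y hy => (hasDerivAt_inv_pow m ?_).comp_add_const y n) (fun n y hy => ?_)
    (half_lt_self hx) (summable_inv_add_pow hm hx) (half_lt_self hx)
  · have : 0 < y := hx₂.trans hy
    positivity
  · have : x / 2 ≤ y := le_of_lt hy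
    have : 0 < y := hx₂.trans hy
    rw [norm_mul, norm_neg, Real.norm_natCast, norm_inv, norm_pow,
      Real.norm_of_nonneg (by positivity)]
    gcongr

lemma mul_inv_pow_lt_hurwitzSum_sub {m : ℕ} (hm : 2 ≤ m) {a y : ℝ} (ha₀ : 0 < a)
    (ha₁ : a < 1) (hy : 0 < y) :
    a * (y ^ m)⁻¹ < hurwitzSum m y - hurwitzSum m (y + a) := by
  have hζ (b : ℝ) (hb : 0 < y + b) :
      HasSum (fun n : ℕ => ((y + b + n) ^ m)⁻¹) (hurwitzSum m (y + b)) :=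
    (summable_inv_add_pow hm hb).hasSum
  have hconv (n : ℕ) :
      ((y + a + n) ^ m)⁻¹ < (1 - a) * ((y + n) ^ m)⁻¹ + a * ((y + 1 + n) ^ m)⁻¹ := by
    have h := (strictConvexOn_inv_pow (by omega : m ≠ 0)).2 (x := y + n) (y := y + 1 + n)
      (by simp only [Set.mem_Ioi]; positivity) (by simp only [Set.mem_Ioi]; positivity)
      (by linarith) (sub_pos.2 ha₁) ha₀ (by ring)
    have hmid : (1 - a) * (y + n) + a * (y + 1 + n) = y + a + n := by ring
    rwa [smul_eq_mul, smul_eq_mul, hmid] at h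
  have key := hasSum_lt (i := 0) (fun n => by linarith [hconv n]) (by linarith [hconv 0])
    (((summable_inv_add_pow hm hy).hasSum.sub (hζ 1 (by linarith))).mul_left a)
    ((summable_inv_add_pow hm hy).hasSum.sub (hζ a (by linarith)))
  have htel : hurwitzSum m y - hurwitzSum m (y + 1) = (y ^ m)⁻¹ := by
    rw [hurwitzSum_eq_inv_pow_add hm hy]
    ring
  rwa [← hurwitzSum, htel] at key

noncomputable def digammaSeries (x : ℝ) : ℝ :=
  -eulerMascheroniConstant + ∑' n : ℕ, (((n : ℝ) + 1)⁻¹ - (x + n)⁻¹)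

lemma hasDerivAt_digammaSeries {x : ℝ} (hx : 0 < x) :
    HasDerivAt digammaSeries (hurwitzSum 2 x) x := by
  have hc : 0 < min x 1 / 2 := by positivity
  have hcx : min x 1 / 2 < x := (half_lt_self (by positivity)).trans_le (min_le_left x 1)
  have hc₁ : min x 1 / 2 < 1 := (half_lt_self (by positivity)).trans_le (min_le_right x 1)
  unfold hurwitzSum
  refine .const_add _ <| hasDerivAt_tsum_of_isPreconnected
    (g := fun (n : ℕ) (y : ℝ) => ((n : ℝ) + 1)⁻¹ - (y + n)⁻¹)
    (g' := fun (n : ℕ) (y : ℝ) => ((y + n) ^ 2)⁻¹) (t := Ioi (min x 1 / 2))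
    (summable_inv_add_pow le_rfl hc) isOpen_Ioi isPreconnected_Ioi (fun n y hy => ?_)
    (fun n y hy => ?_) hc₁ ?_ hcx
  · have : 0 < y + n := by have : 0 < y := hc.trans hy; positivity
    simpa using ((hasDerivAt_inv this.ne').comp_add_const y (n : ℝ)).const_sub _
  · have : min x 1 / 2 ≤ y := le_of_lt hy
    have : 0 < y := hc.trans hy
    rw [norm_inv, norm_pow, Real.norm_of_nonneg (by positivity)]
    gcongr
  · -- every term vanishes at `y = 1`
    simp [add_comm]

lemma hasDerivAt_logGammaSeq (n : ℕ) {x : ℝ} (hx : 0 < x) :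
    HasDerivAt (fun y => BohrMollerup.logGammaSeq y n)
      (Real.log n - ∑ m ∈ range (n + 1), (x + m)⁻¹) x := by
  have hlog : HasDerivAt (fun y => ∑ m ∈ range (n + 1), Real.log (y + m))
      (∑ m ∈ range (n + 1), (x + m)⁻¹) x :=
    .fun_sum fun m _ => by
      simpa using (hasDerivAt_log (by positivity : x + m ≠ 0)).comp_add_const x (m : ℝ)
  exact ((hasDerivAt_mul_const (Real.log n)).add_const _).sub hlog

lemma tendsto_log_sub_harmonic_succ :
    Tendsto (fun n : ℕ => Real.log n - harmonic (n + 1)) atTop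
      (𝓝 (-eulerMascheroniConstant)) := by
  have := tendsto_harmonic_sub_log.neg.sub (tendsto_one_div_add_atTop_nhds_zero_nat (𝕜 := ℝ))
  rw [sub_zero] at this
  refine this.congr fun n => ?_
  rw [harmonic_succ]
  push_cast
  ring

lemma abs_inv_succ_sub_inv_add_le {c y : ℝ} (hc : 0 < c) (hc₁ : c ≤ 1) (hcy : c ≤ y)
    (m : ℕ) :
    |((m : ℝ) + 1)⁻¹ - (y + m)⁻¹| ≤ |y - 1| * ((c + m) ^ 2)⁻¹ := by
  have hy : 0 < y := hc.trans_le hcy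
  have : ((m : ℝ) + 1)⁻¹ - (y + m)⁻¹ = (y - 1) * (((m : ℝ) + 1) * (y + m))⁻¹ := by
    field_simp
    ring
  rw [this, abs_mul, abs_of_pos (by positivity : 0 < (((m : ℝ) + 1) * (y + m))⁻¹)]
  gcongr
  rw [sq]
  exact mul_le_mul (by linarith) (by linarith) (by positivity) (by positivity)

lemma tendstoUniformlyOn_deriv_logGammaSeq {c R : ℝ} (hc : 0 < c) (hc₁ : c ≤ 1) :
    TendstoUniformlyOn (fun (n : ℕ) (y : ℝ) => Real.log n - ∑ m ∈ range (n + 1), (y + m)⁻¹)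
      digammaSeries atTop (Ioo c R) := by
  have hsum := tendstoUniformlyOn_tsum_nat (s := Ioo c R)
    (f := fun (m : ℕ) (y : ℝ) => ((m : ℝ) + 1)⁻¹ - (y + m)⁻¹)
    ((summable_inv_add_pow le_rfl hc).mul_left (|R| + 1)) fun m y hy => by
      refine (abs_inv_succ_sub_inv_add_le hc hc₁ hy.1.le m).trans ?_
      gcongr
      rw [abs_le]
      constructor <;> linarith [le_abs_self R, hy.1, hy.2]
  have hshift : TendstoUniformlyOn
      (fun (n : ℕ) (y : ℝ) => ∑ m ∈ range (n + 1), (((m : ℝ) + 1)⁻¹ - (y + m)⁻¹))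
      (fun y => ∑' m : ℕ, (((m : ℝ) + 1)⁻¹ - (y + m)⁻¹)) atTop (Ioo c R) :=
    fun u hu => (tendsto_add_atTop_nat 1).eventually (hsum u hu)
  refine ((tendsto_log_sub_harmonic_succ.tendstoUniformlyOn_const _).add hshift).congr
    (.of_forall fun n y _ => ?_)
  simp only [Pi.add_apply, sum_sub_distrib, harmonic, Rat.cast_sum]
  push_cast
  ring

lemma hasDerivAt_log_Gamma {x : ℝ} (hx : 0 < x) :
    HasDerivAt (fun y => Real.log (Gamma y)) (digammaSeries x) x := by
  have hc : 0 < min x 1 / 2 := by positivity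
  have hcx : min x 1 / 2 < x := (half_lt_self (by positivity)).trans_le (min_le_left x 1)
  have hc₁ : min x 1 / 2 ≤ 1 := by linarith [min_le_right x 1]
  exact hasDerivAt_of_tendstoLocallyUniformlyOn isOpen_Ioo
    (tendstoUniformlyOn_deriv_logGammaSeq (R := x + 1) hc hc₁).tendstoLocallyUniformlyOn
    (.of_forall fun n y hy => hasDerivAt_logGammaSeq n (hc.trans hy.1))
    (fun y hy => BohrMollerup.tendsto_log_gamma (hc.trans hy.1)) ⟨hcx, by linarith⟩

lemma digamma_eqOn_digammaSeries : EqOn digamma digammaSeries (Ioi 0) :=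
  fun _ hx => (hasDerivAt_log_Gamma hx).deriv

lemma hasDerivAt_digamma {x : ℝ} (hx : 0 < x) : HasDerivAt digamma (hurwitzSum 2 x) x :=
  (hasDerivAt_digammaSeries hx).congr_of_eventuallyEq <|
    digamma_eqOn_digammaSeries.eventuallyEq_of_mem (Ioi_mem_nhds hx)

lemma polygamma_succ (j : ℕ) : polygamma (j + 1) = deriv (polygamma j) :=
  congrFun (Function.iterate_succ' deriv j) digamma

lemma polygamma_succ_eqOn (j : ℕ) :
    EqOn (polygamma (j + 1)) (fun x => (-1) ^ j * (j + 1)! * hurwitzSum (j + 2) x) (Ioi 0) := by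
  induction j with
  | zero =>
    intro x hx
    simpa [polygamma_succ, polygamma] using (hasDerivAt_digamma hx).deriv
  | succ j ih =>
    intro x hx
    have h := ((hasDerivAt_hurwitzSum (m := j + 2) (by omega) hx).const_mul
      ((-1) ^ j * (j + 1)! : ℝ)).congr_of_eventuallyEq
      (ih.eventuallyEq_of_mem (Ioi_mem_nhds hx))
    rw [polygamma_succ, h.deriv, Nat.factorial_succ (j + 1)]
    push_cast
    ring

lemma hasDerivAt_polygamma (j : ℕ) {x : ℝ} (hx : 0 < x) :
    HasDerivAt (polygamma j) (polygamma (j + 1) x) x := by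
  rw [polygamma_succ]
  refine DifferentiableAt.hasDerivAt ?_
  cases j with
  | zero => exact (hasDerivAt_digamma hx).differentiableAt
  | succ j =>
    exact ((hasDerivAt_hurwitzSum (by omega) hx).differentiableAt.const_mul _)
      |>.congr_of_eventuallyEq ((polygamma_succ_eqOn j).eventuallyEq_of_mem (Ioi_mem_nhds hx))

/-- For even `j` this is the function `f_{a,j}`; the sign `(-1) ^ j` makes the family closed
under differentiation. -/
noncomputable def polygammaShiftSub (a : ℝ) (j : ℕ) (y : ℝ) : ℝ :=
  polygamma j (y + a) - polygamma j y - (-1) ^ j * a * j ! / y ^ (j + 1)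

lemma hasDerivAt_polygammaShiftSub {a y : ℝ} (ha : 0 ≤ a) (hy : 0 < y) (j : ℕ) :
    HasDerivAt (polygammaShiftSub a j) (polygammaShiftSub a (j + 1) y) y := by
  have h₁ := (hasDerivAt_polygamma j (by positivity : 0 < y + a)).comp_add_const y a
  have h₂ := hasDerivAt_polygamma j hy
  have h₃ := (hasDerivAt_inv_pow (j + 1) hy.ne').const_mul ((-1) ^ j * a * j ! : ℝ)
  unfold polygammaShiftSub
  simp only [div_eq_mul_inv]
  refine ((h₁.sub h₂).sub h₃).congr_deriv ?_
  rw [Nat.factorial_succ]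
  push_cast
  ring

lemma deriv_polygammaShiftSub {a : ℝ} (ha : 0 ≤ a) (j : ℕ) :
    EqOn (deriv (polygammaShiftSub a j)) (polygammaShiftSub a (j + 1)) (Ioi 0) :=
  fun _ hy => (hasDerivAt_polygammaShiftSub ha hy j).deriv

lemma neg_one_pow_mul_polygammaShiftSub_pos {a y : ℝ} (ha₀ : 0 < a) (ha₁ : a < 1) (hy : 0 < y)
    {j : ℕ} (hj : j ≠ 0) : 0 < (-1) ^ j * polygammaShiftSub a j y := by
  obtain ⟨i, rfl⟩ := Nat.exists_eq_succ_of_ne_zero hj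
  have hsq : ((-1 : ℝ) ^ i) ^ 2 = 1 := by rw [← pow_mul, pow_mul']; simp
  have h : (-1) ^ (i + 1) * polygammaShiftSub a (i + 1) y = (i + 1)! *
      (hurwitzSum (i + 2) y - hurwitzSum (i + 2) (y + a) - a * (y ^ (i + 2))⁻¹) := by
    rw [polygammaShiftSub, polygamma_succ_eqOn i (show 0 < y + a by positivity),
      polygamma_succ_eqOn i hy, div_eq_mul_inv]
    linear_combination (-((i + 1)! * (hurwitzSum (i + 2) (y + a) - hurwitzSum (i + 2) y)
      + a * (i + 1)! * (y ^ (i + 2))⁻¹)) * hsq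
  rw [h]
  have := mul_inv_pow_lt_hurwitzSum_sub (m := i + 2) (by omega) ha₀ ha₁ hy
  exact mul_pos (by positivity) (by linarith)

theorem stmt_11 (a : ℝ) (ha : a ∈ Set.Ioo (0:ℝ) 1) (k : ℕ) (hk : Even k) :
    StrictConvexOn ℝ (Set.Ioi 0) (fun y : ℝ =>
      polygamma k (y + a) - polygamma k y - a * (Nat.factorial k : ℝ) / y ^ (k + 1)) := by
  obtain ⟨ha₀, ha₁⟩ := ha
  have hf : (fun y : ℝ => polygamma k (y + a) - polygamma k y - a * (k ! : ℝ) / y ^ (k + 1)) =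
      polygammaShiftSub a k := by
    ext y
    simp [polygammaShiftSub, hk.neg_one_pow]
  rw [hf]
  refine strictConvexOn_of_deriv2_pos (convex_Ioi 0) (fun y hy =>
    (hasDerivAt_polygammaShiftSub ha₀.le hy k).continuousAt.continuousWithinAt) fun y hy => ?_
  rw [interior_Ioi] at hy
  rw [Function.iterate_succ_apply', Function.iterate_one,
    ((deriv_polygammaShiftSub ha₀.le k).eventuallyEq_of_mem (Ioi_mem_nhds hy)).deriv_eq,
    deriv_polygammaShiftSub ha₀.le (k + 1) hy]
  simpa [(hk.add even_two).neg_one_pow] using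
    neg_one_pow_mul_polygammaShiftSub_pos ha₀ ha₁ hy (j := k + 2) (by omega)
end

section
/- For every x > 1, one has 1/(2x²) + π²/3 - 9/2 < ψ'(x + 1/2) - ψ'(x) < 1/(2x²). -/
/-!
Since `log ∘ Γ` is convex, `ψ` is monotone on `(0, ∞)`, and it satisfies `ψ (x + 1) = ψ x + 1 / x`.
These two properties alone force `ψ x = ψ 1 + ∑ₖ (1 / (k + 1) - 1 / (x + k))`, and termwise
differentiation gives `ψ' x = ∑ₖ 1 / (x + k) ^ 2`. Hence `ψ'` is decreasing, which is the upper
bound, and so is `x ↦ ψ' x - ψ' (x + 1/2)`: for `x ≥ 1` it is at most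
`ψ' 1 - ψ' (3/2) = π²/6 - (π²/2 - 4) = 4 - π²/3`, while `1 / (2 x²) < 1/2`.
-/

open Real Filter Topology Set

section MonotoneRecurrence

variable {f : ℝ → ℝ}

lemma add_nat_eq_add_sum_of_add_one (hrec : ∀ x, 0 < x → f (x + 1) = f x + 1 / x) {x : ℝ}
    (hx : 0 < x) (n : ℕ) : f (x + n) = f x + ∑ k ∈ Finset.range n, 1 / (x + k) := by
  induction n with
  | zero => simp
  | succ n ih =>
    rw [Nat.cast_succ, ← add_assoc, hrec _ (by positivity), ih, Finset.sum_range_succ, add_assoc]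

lemma sub_le_of_monotoneOn_of_add_one (hmono : MonotoneOn f (Ioi 0))
    (hrec : ∀ x, 0 < x → f (x + 1) = f x + 1 / x) {a b : ℝ} (ha : 0 < a) (hb : 0 < b) (m : ℕ)
    (hab : a ≤ b + m) : f a - f b ≤ m / b := by
  have hsum : ∑ k ∈ Finset.range m, 1 / (b + k) ≤ m / b :=
    calc ∑ k ∈ Finset.range m, 1 / (b + k)
        ≤ ∑ _k ∈ Finset.range m, 1 / b :=
          Finset.sum_le_sum fun k _ => one_div_le_one_div_of_le hb (by simp)
      _ = m / b := by simp [div_eq_mul_inv]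
  have hle := hmono ha (mem_Ioi.mpr (by positivity)) hab
  rw [add_nat_eq_add_sum_of_add_one hrec hb] at hle
  linarith

lemma tendsto_const_div_add_natCast (c d : ℝ) :
    Tendsto (fun n : ℕ => c / (d + n)) atTop (𝓝 0) :=
  tendsto_const_nhds.div_atTop (tendsto_atTop_add_const_left _ d tendsto_natCast_atTop_atTop)

lemma tendsto_sub_of_monotoneOn_of_add_one (hmono : MonotoneOn f (Ioi 0))
    (hrec : ∀ x, 0 < x → f (x + 1) = f x + 1 / x) {x : ℝ} (hx : 0 < x) :
    Tendsto (fun n : ℕ => f (x + n) - f (1 + n)) atTop (𝓝 0) := by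
  obtain ⟨m, hm⟩ := exists_nat_ge |x - 1|
  have hm' := abs_le.mp hm
  have upper (n : ℕ) : f (x + n) - f (1 + n) ≤ m / (1 + n) :=
    sub_le_of_monotoneOn_of_add_one hmono hrec (by positivity) (by positivity) m (by linarith)
  have lower (n : ℕ) : -(m / (x + n)) ≤ f (x + n) - f (1 + n) := by
    have := sub_le_of_monotoneOn_of_add_one hmono hrec (a := 1 + n) (b := x + n)
      (by positivity) (by positivity) m (by linarith)
    linarith
  have hlower := (tendsto_const_div_add_natCast m x).neg
  rw [neg_zero] at hlower
  exact tendsto_of_tendsto_of_tendsto_of_le_of_le hlower (tendsto_const_div_add_natCast m 1)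
    lower upper

end MonotoneRecurrence

section DigammaSeries

lemma summable_one_div_add_natCast_sq {a : ℝ} (ha : 0 < a) :
    Summable (fun k : ℕ => 1 / (a + k) ^ 2) := by
  have h := (Real.summable_one_div_nat_add_rpow a 2).mpr one_lt_two
  refine h.congr fun k => ?_
  rw [add_comm, abs_of_pos (by positivity), Real.rpow_two]

lemma norm_one_div_add_natCast_sq_le {a y : ℝ} (ha : 0 < a) (hay : a < y) (k : ℕ) :
    ‖1 / (y + k) ^ 2‖ ≤ 1 / (a + k) ^ 2 := by
  rw [Real.norm_of_nonneg (by positivity)]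
  gcongr

lemma hasDerivAt_one_div_sub_one_div_add (c d y : ℝ) (hy : y + d ≠ 0) :
    HasDerivAt (fun y => c - 1 / (y + d)) (1 / (y + d) ^ 2) y := by
  have h := (((hasDerivAt_id y).add_const d).inv hy).const_sub c
  simpa [one_div, neg_div] using h

lemma summable_one_div_add_one_sub_one_div_add {x : ℝ} (hx : 0 < x) :
    Summable (fun k : ℕ => 1 / ((k : ℝ) + 1) - 1 / (x + k)) := by
  obtain ⟨a, ha, hlt⟩ := exists_between (lt_min hx one_pos)
  have hax : a < x := hlt.trans_le (min_le_left _ _)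
  have ha1 : a < 1 := hlt.trans_le (min_le_right _ _)
  -- All terms vanish at `1`; the summable bound on the derivatives carries convergence to `Ioi a`.
  refine summable_of_summable_hasDerivAt_of_isPreconnected (summable_one_div_add_natCast_sq ha)
    isOpen_Ioi (convex_Ioi a).isPreconnected
    (fun k y hy => hasDerivAt_one_div_sub_one_div_add _ _ y
      (by have : 0 < y := ha.trans hy; positivity))
    (fun k y hy => norm_one_div_add_natCast_sq_le ha hy k) (y₀ := 1) ha1 ?_ hax
  simp [add_comm]

lemma hasDerivAt_tsum_one_div_add_one_sub_one_div_add {x : ℝ} (hx : 0 < x) :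
    HasDerivAt (fun y => ∑' k : ℕ, (1 / ((k : ℝ) + 1) - 1 / (y + k)))
      (∑' k : ℕ, 1 / (x + k) ^ 2) x := by
  have ha : 0 < x / 2 := by positivity
  exact hasDerivAt_tsum_of_isPreconnected (summable_one_div_add_natCast_sq ha) isOpen_Ioi
    (convex_Ioi _).isPreconnected
    (fun k y hy => hasDerivAt_one_div_sub_one_div_add _ _ y
      (by have : 0 < y := ha.trans hy; positivity))
    (fun k y hy => norm_one_div_add_natCast_sq_le ha hy k) (half_lt_self hx)
    (summable_one_div_add_one_sub_one_div_add hx) (half_lt_self hx)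

variable {f : ℝ → ℝ}

theorem eq_add_tsum_of_monotoneOn_of_add_one (hmono : MonotoneOn f (Ioi 0))
    (hrec : ∀ x, 0 < x → f (x + 1) = f x + 1 / x) {x : ℝ} (hx : 0 < x) :
    f x = f 1 + ∑' k : ℕ, (1 / ((k : ℝ) + 1) - 1 / (x + k)) := by
  have hpartial (n : ℕ) : ∑ k ∈ Finset.range n, (1 / ((k : ℝ) + 1) - 1 / (x + k))
      = f x - f 1 - (f (x + n) - f (1 + n)) := by
    rw [Finset.sum_sub_distrib, add_nat_eq_add_sum_of_add_one hrec hx,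
      add_nat_eq_add_sum_of_add_one hrec one_pos]
    simp only [add_comm (1 : ℝ)]
    ring
  have hlim := (tendsto_sub_of_monotoneOn_of_add_one hmono hrec hx).const_sub (f x - f 1)
  rw [sub_zero, ← funext hpartial] at hlim
  have := tendsto_nhds_unique
    (summable_one_div_add_one_sub_one_div_add hx).hasSum.tendsto_sum_nat hlim
  linarith

end DigammaSeries

section Digamma

lemma differentiableAt_log_Gamma {x : ℝ} (hx : 0 < x) :
    DifferentiableAt ℝ (fun y => log (Gamma y)) x := by
  have hx' : ∀ m : ℕ, x ≠ -m := fun m => ((neg_nonpos.mpr m.cast_nonneg).trans_lt hx).ne'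
  exact (differentiableAt_Gamma hx').log (Gamma_ne_zero hx')

lemma digamma_add_one {x : ℝ} (hx : 0 < x) : digamma (x + 1) = digamma x + 1 / x := by
  rw [digamma, ← deriv_comp_add_const, one_div, ← Real.deriv_log,
    ← deriv_add (differentiableAt_log_Gamma hx) (differentiableAt_log hx.ne')]
  refine Filter.EventuallyEq.deriv_eq ?_
  filter_upwards [eventually_gt_nhds hx] with y hy
  rw [Gamma_add_one hy.ne', log_mul hy.ne' (Gamma_pos_of_pos hy).ne', add_comm, Pi.add_apply]

lemma monotoneOn_digamma : MonotoneOn digamma (Ioi 0) :=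
  convexOn_log_Gamma.monotoneOn_deriv fun _ hy => differentiableAt_log_Gamma hy

theorem hasSum_deriv_digamma {x : ℝ} (hx : 0 < x) :
    HasSum (fun k : ℕ => 1 / (x + k) ^ 2) (deriv digamma x) := by
  have hseries : digamma =ᶠ[𝓝 x]
      fun y => digamma 1 + ∑' k : ℕ, (1 / ((k : ℝ) + 1) - 1 / (y + k)) := by
    filter_upwards [eventually_gt_nhds hx] with y hy
    exact eq_add_tsum_of_monotoneOn_of_add_one monotoneOn_digamma
      (fun _ hz => digamma_add_one hz) hy
  rw [hseries.deriv_eq,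
    ((hasDerivAt_tsum_one_div_add_one_sub_one_div_add hx).const_add _).deriv]
  exact (summable_one_div_add_natCast_sq hx).hasSum

end Digamma

section TrigammaValues

lemma deriv_digamma_one : deriv digamma 1 = π ^ 2 / 6 := by
  refine (hasSum_deriv_digamma one_pos).unique ?_
  simpa [add_comm] using (hasSum_nat_add_iff' 1).mpr hasSum_zeta_two

lemma hasSum_one_div_two_mul_add_one_sq :
    HasSum (fun k : ℕ => 1 / (2 * k + 1 : ℝ) ^ 2) (π ^ 2 / 8) := by
  have heven : HasSum (fun k : ℕ => 1 / ((2 * k : ℕ) : ℝ) ^ 2) (1 / 4 * (π ^ 2 / 6)) :=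
    (hasSum_zeta_two.mul_left (1 / 4)).congr_fun fun k => by push_cast; ring
  have hodd : Summable (fun k : ℕ => 1 / ((2 * k + 1 : ℕ) : ℝ) ^ 2) :=
    hasSum_zeta_two.summable.comp_injective fun a b hab => by simpa using hab
  have htotal := (HasSum.even_add_odd (f := fun n : ℕ => 1 / (n : ℝ) ^ 2) heven
    hodd.hasSum).unique hasSum_zeta_two
  rw [show π ^ 2 / 8 = ∑' k : ℕ, 1 / ((2 * k + 1 : ℕ) : ℝ) ^ 2 by linarith]
  exact hodd.hasSum.congr_fun fun k => by push_cast; rfl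

lemma deriv_digamma_three_halves : deriv digamma (3 / 2) = π ^ 2 / 2 - 4 := by
  refine (hasSum_deriv_digamma (by norm_num)).unique ?_
  have h := ((hasSum_nat_add_iff' 1).mpr hasSum_one_div_two_mul_add_one_sq).mul_left 4
  rw [show π ^ 2 / 2 - 4 = 4 * (π ^ 2 / 8 - ∑ i ∈ Finset.range 1, 1 / (2 * (i : ℝ) + 1) ^ 2) by
    norm_num; ring]
  refine h.congr_fun fun k => ?_
  push_cast
  field_simp
  ring

end TrigammaValues

section TrigammaComparison

lemma one_div_sq_sub_one_div_add_sq_le {a b h : ℝ} (hh : 0 ≤ h) (hb : 0 < b) (hba : b ≤ a) :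
    1 / a ^ 2 - 1 / (a + h) ^ 2 ≤ 1 / b ^ 2 - 1 / (b + h) ^ 2 := by
  have hfactor (c : ℝ) (hc : 0 < c) :
      1 / c ^ 2 - 1 / (c + h) ^ 2 = h / (c * (c + h)) * (1 / c + 1 / (c + h)) := by
    field_simp
    ring
  have ha : 0 < a := hb.trans_le hba
  rw [hfactor a ha, hfactor b hb]
  gcongr

lemma deriv_digamma_add_le {x h : ℝ} (hx : 0 < x) (hh : 0 ≤ h) :
    deriv digamma (x + h) ≤ deriv digamma x :=
  hasSum_le (fun k => one_div_le_one_div_of_le (by positivity) (by gcongr; linarith))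
    (hasSum_deriv_digamma (by positivity)) (hasSum_deriv_digamma hx)

lemma deriv_digamma_sub_deriv_digamma_add_le {a b h : ℝ} (hh : 0 ≤ h) (hb : 0 < b) (hba : b ≤ a) :
    deriv digamma a - deriv digamma (a + h) ≤ deriv digamma b - deriv digamma (b + h) := by
  have hseries {c : ℝ} (hc : 0 < c) : HasSum (fun k : ℕ => 1 / (c + k) ^ 2 - 1 / (c + h + k) ^ 2)
      (deriv digamma c - deriv digamma (c + h)) :=
    (hasSum_deriv_digamma hc).sub (hasSum_deriv_digamma (by positivity))
  refine hasSum_le (fun k => ?_) (hseries (hb.trans_le hba)) (hseries hb)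
  simpa only [add_right_comm _ h] using
    one_div_sq_sub_one_div_add_sq_le hh (by positivity : 0 < b + k) (by gcongr : b + k ≤ a + k)

end TrigammaComparison

theorem stmt_18 (x : ℝ) (hx : 1 < x) :
    1 / (2 * x ^ 2) + Real.pi ^ 2 / 3 - 9/2 < deriv digamma (x + 1/2) - deriv digamma x ∧
    deriv digamma (x + 1/2) - deriv digamma x < 1 / (2 * x ^ 2) := by
  have hx0 : 0 < x := one_pos.trans hx
  have hsmall : 1 / (2 * x ^ 2) < 1 / 2 := by
    gcongr
    nlinarith
  have hpos : 0 < 1 / (2 * x ^ 2) := by positivity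
  have hlower := deriv_digamma_sub_deriv_digamma_add_le (h := 1 / 2) (by norm_num) one_pos hx.le
  rw [show (1 : ℝ) + 1 / 2 = 3 / 2 by norm_num, deriv_digamma_one,
    deriv_digamma_three_halves] at hlower
  have hupper := deriv_digamma_add_le hx0 (h := 1 / 2) (by norm_num)
  constructor <;> linarith
end
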